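/- In a finite tree T = (V,E) with star arrangement R of equivalence classes and source s contained in the union of the classes of R, if o ∈ ∂R and ω is an observer in the subtree V_{o,R} hanging off o away from R, then τ_ω − τ_o = Σ_{e ∈ [o,ω]} τ_e, which is independent of the vector (τ_{o'})_{o' ∈ ∂R} and its distribution does not depend on s. Consequently, (τ_o)_{o ∈ ∂R} is a sufficient statistic for estimating s. -/

import Mathlib

open MeasureTheory ProbabilityTheory SimpleGraph

variable {V : Type*}

/-- The unique path between two vertices of a tree, as a walk. -/
noncomputable def treePath (G : SimpleGraph V) (hG : G.IsTree) (u v : V) : G.Walk u v :=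
  (hG.existsUnique_path u v).choose

/-- The equivalence class (for the relation "the connecting path avoids the observer
set `O`") of a non-observer vertex `u`. -/
def classOf (G : SimpleGraph V) (hG : G.IsTree) (O : Set V) (u : V) : Set V :=
  {w | w ∉ O ∧ ∀ x ∈ (treePath G hG u w).support, x ∉ O}

/-- The boundary `∂r` of a set `r`: the observers adjacent to some vertex of `r`. -/
def boundary (G : SimpleGraph V) (O : Set V) (r : Set V) : Set V :=
  {o | o ∈ O ∧ ∃ u ∈ r, G.Adj o u}

/-- `V_{o;R}`: vertices whose path from `o` meets no class of `R`. -/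
def subtreeVerts (G : SimpleGraph V) (hG : G.IsTree) (R : Set (Set V)) (o : V) : Set V :=
  {w | ∀ r ∈ R, ∀ x ∈ (treePath G hG o w).support, x ∉ r}

/-- Infection time of `v` for source `s` and edge delays `d`: the sum of the delays
along the unique path from `s` to `v`. -/
noncomputable def infectionTime (G : SimpleGraph V) (hG : G.IsTree) (d : Sym2 V → ℝ)
    (s v : V) : ℝ :=
  (((treePath G hG s v).edges).map d).sum

/-- A class `r` is feasible for observer infection times `τ` if, for every `o ∈ ∂r` and
observers `o₁, o₂` in the subtree `T_{o;r}` with `o₁` an ancestor of `o₂` (i.e. `o₁` on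
the path from `o` to `o₂`), `τ o₁ ≤ τ o₂`. -/
def feasible (G : SimpleGraph V) (hG : G.IsTree) (O : Set V) (τ : V → ℝ) (r : Set V) :
    Prop :=
  ∀ o ∈ boundary G O r, ∀ o₁ ∈ subtreeVerts G hG {r} o ∩ O,
    ∀ o₂ ∈ subtreeVerts G hG {r} o ∩ O,
      o₁ ∈ (treePath G hG o o₂).support → τ o₁ ≤ τ o₂

section Helpers

variable {G : SimpleGraph V} (hG : G.IsTree)

lemma treePath_isPath (u v : V) : (treePath G hG u v).IsPath :=
  (hG.existsUnique_path u v).choose_spec.1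

lemma eq_treePath {u v : V} (p : G.Walk u v) (hp : p.IsPath) : p = treePath G hG u v :=
  (hG.existsUnique_path u v).choose_spec.2 p hp

lemma support_treePath_subset {u v : V} (p : G.Walk u v) :
    (treePath G hG u v).support ⊆ p.support := by
  classical
  have h := eq_treePath hG p.bypass p.bypass_isPath
  rw [← h]
  exact p.support_bypass_subset

lemma treePath_reverse (u v : V) : (treePath G hG u v).reverse = treePath G hG v u :=
  eq_treePath hG _ (treePath_isPath hG u v).reverse

lemma mem_support_symm {u v x : V} :
    x ∈ (treePath G hG u v).support ↔ x ∈ (treePath G hG v u).support := by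
  rw [← treePath_reverse hG v u, Walk.support_reverse, List.mem_reverse]

lemma avoid_trans {o x y z : V} (h1 : o ∉ (treePath G hG x y).support)
    (h2 : o ∉ (treePath G hG y z).support) : o ∉ (treePath G hG x z).support := by
  intro h
  have h3 := support_treePath_subset hG ((treePath G hG x y).append (treePath G hG y z)) h
  rw [Walk.mem_support_append_iff] at h3
  tauto

lemma avoid_symm {o x y : V} (h : o ∉ (treePath G hG x y).support) :
    o ∉ (treePath G hG y x).support := fun hc => h ((mem_support_symm hG).2 hc)

lemma treePath_decomp {u v x : V} (h : x ∈ (treePath G hG u v).support) :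
    treePath G hG u v = (treePath G hG u x).append (treePath G hG x v) := by
  classical
  have hp := treePath_isPath hG u v
  rw [← eq_treePath hG _ (hp.takeUntil h), ← eq_treePath hG _ (hp.dropUntil h),
    Walk.take_spec]

variable {O : Set V}

lemma classOf_path_avoids {u a b : V} (ha : a ∈ classOf G hG O u)
    (hb : b ∈ classOf G hG O u) : ∀ x ∈ (treePath G hG a b).support, x ∉ O := by
  intro x hx
  have hsub := support_treePath_subset hG ((treePath G hG a u).append (treePath G hG u b)) hx
  rw [Walk.mem_support_append_iff] at hsub
  rcases hsub with h | h
  · exact ha.2 x ((mem_support_symm hG).1 h)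
  · exact hb.2 x h

variable {R : Set (Set V)}

/-- If `a` is a class vertex adjacent to `o`, then `o` lies on the path from `a` to
any vertex of the subtree `V_{o;R}`. -/
lemma cons_mem {o w : V} (hw : w ∈ subtreeVerts G hG R o)
    (a : V) (r'' : Set V) (hr'' : r'' ∈ R) (ha : a ∈ r'') (hadj : G.Adj o a) :
    o ∈ (treePath G hG a w).support := by
  by_contra hno
  have hpath : (Walk.cons hadj (treePath G hG a w)).IsPath :=
    (treePath_isPath hG a w).cons hno
  have heq := eq_treePath hG _ hpath
  have hmem : a ∈ (treePath G hG o w).support := by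
    rw [← heq]
    simp [Walk.support_cons]
  exact hw r'' hr'' a hmem ha

/-- Key structural lemma: the path from any source inside `⋃ R` to a vertex of the
subtree `V_{o;R}` passes through `o`. -/
lemma key_mem (hR : ∀ r ∈ R, ∃ u, u ∉ O ∧ r = classOf G hG O u)
    (hstar : ∃ o ∈ O, ∀ r ∈ R, o ∈ boundary G O r)
    {o : V} (ho : ∃ r₀ ∈ R, o ∈ boundary G O r₀)
    {w : V} (hw : w ∈ subtreeVerts G hG R o)
    {s : V} (hs : ∃ r ∈ R, s ∈ r) :
    o ∈ (treePath G hG s w).support := by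
  by_contra hno
  obtain ⟨r, hrR, hsr⟩ := hs
  obtain ⟨r₀, hr₀R, hoO, u₀, hu₀, hadj₀⟩ := ho
  obtain ⟨ostar, hostarO, hstar'⟩ := hstar
  obtain ⟨-, u₁, hu₁, hadj₁⟩ := hstar' r hrR
  obtain ⟨-, u₂, hu₂, hadj₂⟩ := hstar' r₀ hr₀R
  obtain ⟨u, -, hrcls⟩ := hR r hrR
  obtain ⟨u', -, hr₀cls⟩ := hR r₀ hr₀R
  have hA_su₁ : o ∉ (treePath G hG s u₁).support := fun h =>
    classOf_path_avoids hG (hrcls ▸ hsr) (hrcls ▸ hu₁) o h hoO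
  have hA_u₁w : o ∉ (treePath G hG u₁ w).support :=
    avoid_trans hG (avoid_symm hG hA_su₁) hno
  have hnA_u₀w : o ∈ (treePath G hG u₀ w).support := cons_mem hG hw u₀ r₀ hr₀R hu₀ hadj₀
  by_cases hcase : ostar = o
  · subst hcase
    exact hA_u₁w (cons_mem hG hw u₁ r hrR hu₁ hadj₁)
  · have hA_u₁u₂ : o ∉ (treePath G hG u₁ u₂).support := by
      intro h
      have h3 := support_treePath_subset hG
        (Walk.cons hadj₁.symm (Walk.cons hadj₂ Walk.nil)) h
      simp only [Walk.support_cons, Walk.support_nil, List.mem_cons,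
        List.mem_singleton] at h3
      rcases h3 with h3 | h3 | h3 | h3
      · exact (hrcls ▸ hu₁ : u₁ ∈ classOf G hG O u).1 (h3 ▸ hoO)
      · exact hcase h3.symm
      · exact (hr₀cls ▸ hu₂ : u₂ ∈ classOf G hG O u').1 (h3 ▸ hoO)
      · simp at h3
    have hA_u₂u₀ : o ∉ (treePath G hG u₂ u₀).support := fun h =>
      classOf_path_avoids hG (hr₀cls ▸ hu₂) (hr₀cls ▸ hu₀) o h hoO
    have hA_u₂w : o ∉ (treePath G hG u₂ w).support :=
      avoid_trans hG (avoid_symm hG hA_u₁u₂) hA_u₁w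
    exact (avoid_trans hG (avoid_symm hG hA_u₂u₀) hA_u₂w) hnA_u₀w

lemma not_mem_dropPart {u v x o : V} (hx : x ∈ (treePath G hG u v).support)
    (ho1 : o ∈ (treePath G hG u x).support) (hox : o ≠ x) :
    o ∉ (treePath G hG x v).support := by
  intro hmem
  have hdec := treePath_decomp hG hx
  have hnd : ((treePath G hG u x).support ++ (treePath G hG x v).support.tail).Nodup := by
    rw [← Walk.support_append, ← hdec]
    exact (treePath_isPath hG u v).support_nodup
  have h2 : o ∈ (treePath G hG x v).support.tail := by
    have hc := (treePath G hG x v).support_eq_cons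
    rw [hc] at hmem
    rcases List.mem_cons.1 hmem with h | h
    · exact absurd h hox
    · exact h
  exact (List.disjoint_of_nodup_append hnd) ho1 h2

lemma support_inter (hR : ∀ r ∈ R, ∃ u, u ∉ O ∧ r = classOf G hG O u)
    (hstar : ∃ o ∈ O, ∀ r ∈ R, o ∈ boundary G O r)
    {o : V} (ho : ∃ r₀ ∈ R, o ∈ boundary G O r₀)
    {w : V} (hw : w ∈ subtreeVerts G hG R o) {s : V} (hs : ∃ r ∈ R, s ∈ r)
    {o' : V} (ho' : ∃ r' ∈ R, o' ∈ boundary G O r')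
    {x : V} (hx1 : x ∈ (treePath G hG s o').support)
    (hx2 : x ∈ (treePath G hG o w).support) : x = o := by
  by_contra hxo
  have hox : o ≠ x := fun h => hxo h.symm
  have hsw : o ∈ (treePath G hG s w).support := key_mem hG hR hstar ho hw hs
  have hA_xw : o ∉ (treePath G hG x w).support :=
    not_mem_dropPart hG hx2 (Walk.start_mem_support _) hox
  have h_sx : o ∈ (treePath G hG s x).support := by
    by_contra h
    exact (avoid_trans hG h hA_xw) hsw
  have hA_xo' : o ∉ (treePath G hG x o').support :=
    not_mem_dropPart hG hx1 h_sx hox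
  have hA_o'w : o ∉ (treePath G hG o' w).support :=
    avoid_trans hG (avoid_symm hG hA_xo') hA_xw
  obtain ⟨r', hr'R, ho'O, u', hu', hadj'⟩ := ho'
  by_cases hoo' : o' = o
  · exact hA_o'w (by rw [hoo']; exact Walk.start_mem_support _)
  obtain ⟨r₀, hr₀R, hoO, u₀, hu₀, hadj₀⟩ := ho
  obtain ⟨ostar, hostarO, hstar'⟩ := hstar
  obtain ⟨-, u₂', hu₂', hadj₂'⟩ := hstar' r' hr'R
  obtain ⟨-, u₂, hu₂, hadj₂⟩ := hstar' r₀ hr₀R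
  obtain ⟨c', -, hr'cls⟩ := hR r' hr'R
  obtain ⟨c₀, -, hr₀cls⟩ := hR r₀ hr₀R
  by_cases hcase : ostar = o
  · have hn : o ∈ (treePath G hG u₂' w).support :=
      cons_mem hG hw u₂' r' hr'R hu₂' (by rw [← hcase]; exact hadj₂')
    have hA : o ∉ (treePath G hG o' u₂').support := by
      intro h
      have h3 := support_treePath_subset hG (Walk.cons hadj' (treePath G hG u' u₂')) h
      rw [Walk.support_cons, List.mem_cons] at h3
      rcases h3 with h3 | h3
      · exact hoo' h3.symm
      · exact classOf_path_avoids hG (hr'cls ▸ hu') (hr'cls ▸ hu₂') _ h3 hoO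
    exact (avoid_trans hG (avoid_symm hG hA) hA_o'w) hn
  · have hn : o ∈ (treePath G hG u₀ w).support := cons_mem hG hw u₀ r₀ hr₀R hu₀ hadj₀
    have hA : o ∉ (treePath G hG o' u₀).support := by
      intro h
      have h3 := support_treePath_subset hG
        (Walk.cons hadj' ((treePath G hG u' u₂').append
          (Walk.cons hadj₂'.symm (Walk.cons hadj₂ (treePath G hG u₂ u₀))))) h
      simp only [Walk.support_cons, Walk.mem_support_append_iff, List.mem_cons] at h3
      rcases h3 with h3 | h3 | h3 | h3 | h3
      · exact hoo' h3.symm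
      · exact classOf_path_avoids hG (hr'cls ▸ hu') (hr'cls ▸ hu₂') _ h3 hoO
      · exact (hr'cls ▸ hu₂' : u₂' ∈ classOf G hG O c').1 (h3 ▸ hoO)
      · exact hcase h3.symm
      · exact classOf_path_avoids hG (hr₀cls ▸ hu₂) (hr₀cls ▸ hu₀) _ h3 hoO
    exact (avoid_trans hG (avoid_symm hG hA) hA_o'w) hn

lemma edges_disjoint (hR : ∀ r ∈ R, ∃ u, u ∉ O ∧ r = classOf G hG O u)
    (hstar : ∃ o ∈ O, ∀ r ∈ R, o ∈ boundary G O r)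
    {o : V} (ho : ∃ r₀ ∈ R, o ∈ boundary G O r₀)
    {w : V} (hw : w ∈ subtreeVerts G hG R o) {s : V} (hs : ∃ r ∈ R, s ∈ r)
    {o' : V} (ho' : ∃ r' ∈ R, o' ∈ boundary G O r') :
    ∀ e, e ∈ (treePath G hG o w).edges → e ∉ (treePath G hG s o').edges := by
  intro e
  induction e using Sym2.ind with
  | _ a b =>
    intro he1 he2
    have hab : a ≠ b := by
      have := (treePath G hG o w).edges_subset_edgeSet he1
      exact G.ne_of_adj this
    have ha1 : a ∈ (treePath G hG o w).support :=
      Walk.fst_mem_support_of_mem_edges _ he1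
    have hb1 : b ∈ (treePath G hG o w).support :=
      Walk.snd_mem_support_of_mem_edges _ he1
    have ha2 : a ∈ (treePath G hG s o').support :=
      Walk.fst_mem_support_of_mem_edges _ he2
    have hb2 : b ∈ (treePath G hG s o').support :=
      Walk.snd_mem_support_of_mem_edges _ he2
    have hao : a = o := support_inter hG hR hstar ho hw hs ho' ha2 ha1
    have hbo : b = o := support_inter hG hR hstar ho hw hs ho' hb2 hb1
    exact hab (hao.trans hbo.symm)

lemma diff_eq (hR : ∀ r ∈ R, ∃ u, u ∉ O ∧ r = classOf G hG O u)
    (hstar : ∃ o ∈ O, ∀ r ∈ R, o ∈ boundary G O r)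
    {o : V} (ho : ∃ r₀ ∈ R, o ∈ boundary G O r₀)
    {w : V} (hw : w ∈ subtreeVerts G hG R o) {s : V} (hs : ∃ r ∈ R, s ∈ r)
    (d : Sym2 V → ℝ) :
    infectionTime G hG d s w - infectionTime G hG d s o
      = (((treePath G hG o w).edges).map d).sum := by
  have h := key_mem hG hR hstar ho hw hs
  have hdec := treePath_decomp hG h
  unfold infectionTime
  rw [hdec, Walk.edges_append, List.map_append, List.sum_append]
  ring

end Helpers

lemma measurable_list_sum {α β : Type*} [MeasurableSpace α] (l : List β) (g : β → α → ℝ)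
    (hg : ∀ i, Measurable (g i)) : Measurable (fun a => (l.map (fun i => g i a)).sum) := by
  induction l with
  | nil => simp only [List.map_nil, List.sum_nil]; exact measurable_const
  | cons x xs ih => simp only [List.map_cons, List.sum_cons]; exact (hg x).add ih

/-- Sufficiency of the boundary observers of a star arrangement.  Let `R` be a star
arrangement of equivalence classes whose union contains the source `s`, let
`∂R = ⋃_{r∈R} ∂r`, and let `ω₀ ∈ V_{o,R}` be an observer hanging off `o ∈ ∂R` away from
`R`.  Then `τ_{ω₀} − τ_o = Σ_{e ∈ [o,ω₀]} τ_e`; this difference is independent of the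
vector `(τ_{o'})_{o' ∈ ∂R}`, and its distribution does not depend on the location of the
source within `⋃ R`.  (These facts constitute the sufficiency of `(τ_o)_{o ∈ ∂R}`.) -/
theorem boundary_observers_sufficient
    [Fintype V] (G : SimpleGraph V) (hG : G.IsTree) (O : Set V)
    {Ω : Type*} [MeasurableSpace Ω] (P : Measure Ω) [IsProbabilityMeasure P]
    (D : Sym2 V → Ω → ℝ) (hD : ∀ e, Measurable (D e))
    (hDpos : ∀ e ∈ G.edgeSet, ∀ᵐ ω ∂P, 0 < D e ω)
    (hindep : iIndepFun (fun e : G.edgeSet => D e.1) P)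
    (R : Set (Set V)) (hR : ∀ r ∈ R, ∃ u, u ∉ O ∧ r = classOf G hG O u)
    (hstar : ∃ o ∈ O, ∀ r ∈ R, o ∈ boundary G O r)
    (s : V) (hsource : ∃ r ∈ R, s ∈ r)
    (bR : Set V) (hbR : bR = {o | ∃ r ∈ R, o ∈ boundary G O r})
    (o : V) (ho : o ∈ bR)
    (w : V) (hw : w ∈ subtreeVerts G hG R o ∩ O) :
    (∀ ω, infectionTime G hG (fun e => D e ω) s w - infectionTime G hG (fun e => D e ω) s o
        = (((treePath G hG o w).edges).map (fun e => D e ω)).sum) ∧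
      IndepFun
        (fun ω => fun o' : {o' // o' ∈ bR} =>
          infectionTime G hG (fun e => D e ω) s o'.1)
        (fun ω => infectionTime G hG (fun e => D e ω) s w
          - infectionTime G hG (fun e => D e ω) s o) P ∧
      (∀ s', (∃ r ∈ R, s' ∈ r) →
        Measure.map (fun ω => infectionTime G hG (fun e => D e ω) s' w
            - infectionTime G hG (fun e => D e ω) s' o) P
          = Measure.map (fun ω => infectionTime G hG (fun e => D e ω) s w
              - infectionTime G hG (fun e => D e ω) s o) P) := by
  classical
  obtain ⟨hw1, hw2⟩ := hw
  have hoB : ∃ r₀ ∈ R, o ∈ boundary G O r₀ := by rw [hbR] at ho; exact ho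
  have hdiff : ∀ (s' : V), (∃ r ∈ R, s' ∈ r) → ∀ d : Sym2 V → ℝ,
      infectionTime G hG d s' w - infectionTime G hG d s' o
        = (((treePath G hG o w).edges).map d).sum :=
    fun s' hs' d => diff_eq hG hR hstar hoB hw1 hs' d
  refine ⟨fun ω => hdiff s hsource _, ?_, ?_⟩
  · -- independence
    haveI : Fintype ↥G.edgeSet := Fintype.ofFinite _
    set S : Finset ↥G.edgeSet :=
      Finset.univ.filter (fun e => ∃ o' ∈ bR, e.1 ∈ (treePath G hG s o').edges) with hS
    set T : Finset ↥G.edgeSet :=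
      Finset.univ.filter (fun e => e.1 ∈ (treePath G hG o w).edges) with hT
    have hdisj : Disjoint S T := by
      rw [Finset.disjoint_left]
      intro e heS heT
      rw [hS, Finset.mem_filter] at heS
      rw [hT, Finset.mem_filter] at heT
      obtain ⟨-, o', ho'bR, he⟩ := heS
      have ho'B : ∃ r' ∈ R, o' ∈ boundary G O r' := by rw [hbR] at ho'bR; exact ho'bR
      exact edges_disjoint hG hR hstar hoB hw1 hsource ho'B e.1 heT.2 he
    have hbase := hindep.indepFun_finset S T hdisj (fun e => hD e.1)
    have hmemS : ∀ (o' : {o' // o' ∈ bR}) (e : Sym2 V),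
        e ∈ (treePath G hG s o'.1).edges → ∀ h : e ∈ G.edgeSet, (⟨e, h⟩ : ↥G.edgeSet) ∈ S := by
      intro o' e he h
      rw [hS, Finset.mem_filter]
      exact ⟨Finset.mem_univ _, o'.1, o'.2, he⟩
    have hmemT : ∀ (e : Sym2 V),
        e ∈ (treePath G hG o w).edges → ∀ h : e ∈ G.edgeSet, (⟨e, h⟩ : ↥G.edgeSet) ∈ T := by
      intro e he h
      rw [hT, Finset.mem_filter]
      exact ⟨Finset.mem_univ _, he⟩
    set ψ : (↥S → ℝ) → ({o' // o' ∈ bR} → ℝ) := fun g o' =>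
      (((treePath G hG s o'.1).edges).attach.map (fun e =>
        g ⟨⟨e.1, (treePath G hG s o'.1).edges_subset_edgeSet e.2⟩,
          hmemS o' e.1 e.2 _⟩)).sum with hψ
    set φ : (↥T → ℝ) → ℝ := fun g =>
      (((treePath G hG o w).edges).attach.map (fun e =>
        g ⟨⟨e.1, (treePath G hG o w).edges_subset_edgeSet e.2⟩,
          hmemT e.1 e.2 _⟩)).sum with hφ
    have hψm : Measurable ψ :=
      measurable_pi_lambda _ (fun o' =>
        measurable_list_sum _ _ (fun i => measurable_pi_apply _))
    have hφm : Measurable φ :=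
      measurable_list_sum _ _ (fun i => measurable_pi_apply _)
    have hcomp := hbase.comp hψm hφm
    have hYeq : (fun ω => fun o' : {o' // o' ∈ bR} =>
        infectionTime G hG (fun e => D e ω) s o'.1)
        = ψ ∘ (fun a (i : ↥S) => D i.1.1 a) := by
      funext ω o'
      show infectionTime G hG (fun e => D e ω) s o'.1
        = (((treePath G hG s o'.1).edges).attach.map (fun e => D e.1 ω)).sum
      exact (congrArg List.sum (List.attach_map_val (f := fun e => D e ω))).symm
    have hXeq : (fun ω => infectionTime G hG (fun e => D e ω) s w
        - infectionTime G hG (fun e => D e ω) s o)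
        = φ ∘ (fun a (i : ↥T) => D i.1.1 a) := by
      funext ω
      rw [hdiff s hsource]
      show (((treePath G hG o w).edges).map (fun e => D e ω)).sum
        = (((treePath G hG o w).edges).attach.map (fun e => D e.1 ω)).sum
      exact (congrArg List.sum (List.attach_map_val (f := fun e => D e ω))).symm
    rw [hYeq, hXeq]
    exact hcomp
  · intro s' hs'
    have h1 : (fun ω => infectionTime G hG (fun e => D e ω) s' w
        - infectionTime G hG (fun e => D e ω) s' o)
        = fun ω => (((treePath G hG o w).edges).map (fun e => D e ω)).sum :=
      funext fun ω => hdiff s' hs' _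
    have h2 : (fun ω => infectionTime G hG (fun e => D e ω) s w
        - infectionTime G hG (fun e => D e ω) s o)
        = fun ω => (((treePath G hG o w).edges).map (fun e => D e ω)).sum :=
      funext fun ω => hdiff s hsource _
    rw [h1, h2]
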